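/- Let L(x) = i[H,x] + Σ_{i=1}^m (V_i* x V_i − ½(V_i*V_i x + x V_i*V_i)) and L'(x) = i[H',x] + Σ_{i=1}^{m'} (W_i* x W_i − ½(W_i*W_i x + x W_i*W_i)) be two Lindblad generators on Mₙ(ℂ) in standard form, i.e. τ(V_i) = 0, τ(V_i*V_j) = δ_{ij}, τ(W_i) = 0, τ(W_i*W_j) = δ_{ij} where τ = Tr/n. Then there exists C > 0 with Γ_L ≤_cp C Γ_{L'} if and only if span{V₁,…,V_m} ⊆ span{W₁,…,W_{m'}}. -/

import Mathlib

open Matrix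
open scoped ComplexOrder Kronecker

/-- `n × n` complex matrices. -/
abbrev Mat (n : ℕ) := Matrix (Fin n) (Fin n) ℂ

/-- The gradient form (carré du champ) of a map `L`:
`Γ_L(x,y) = L(x*y) − L(x*)y − x*L(y)`. -/
noncomputable def gradForm {n : ℕ} (L : Mat n → Mat n) (x y : Mat n) : Mat n :=
  L (xᴴ * y) - L xᴴ * y - xᴴ * L y

/-- The amplification `id_{M_m} ⊗ L` acting on `M_m(Mₙ(ℂ))`,
realized on matrices indexed by `Fin m × Fin n`. -/
noncomputable def amp {n : ℕ} (m : ℕ) (L : Mat n → Mat n)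
    (X : Matrix (Fin m × Fin n) (Fin m × Fin n) ℂ) :
    Matrix (Fin m × Fin n) (Fin m × Fin n) ℂ :=
  Matrix.of fun p q => L (Matrix.of fun a b => X (p.1, a) (q.1, b)) p.2 q.2

/-- The amplified gradient form `Γ_{id_{M_m} ⊗ L}`. -/
noncomputable def gradFormAmp {n : ℕ} (m : ℕ) (L : Mat n → Mat n)
    (X Y : Matrix (Fin m × Fin n) (Fin m × Fin n) ℂ) :
    Matrix (Fin m × Fin n) (Fin m × Fin n) ℂ :=
  amp m L (Xᴴ * Y) - amp m L Xᴴ * Y - Xᴴ * amp m L Y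

/-- Complete positivity of the gradient form of `L`. -/
def GradCP {n : ℕ} (L : Mat n → Mat n) : Prop :=
  ∀ (m : ℕ) (X : Matrix (Fin m × Fin n) (Fin m × Fin n) ℂ),
    (gradFormAmp m L X X).PosSemidef

/-- The Lindblad generator with Hamiltonian `H` and jump operators `V`:
`L(x) = i[H,x] + Σ_j (V_j* x V_j − ½(V_j*V_j x + x V_j*V_j))`. -/
noncomputable def lindbladOf {n : ℕ} (H : Mat n) {m : ℕ} (V : Fin m → Mat n) :
    Mat n → Mat n :=
  fun x => Complex.I • (H * x - x * H) +
    ∑ i, ((V i)ᴴ * x * V i -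
      (2⁻¹ : ℂ) • ((V i)ᴴ * V i * x + x * ((V i)ᴴ * V i)))

/-- `L` is a Lindblad generator. -/
def IsLindblad {n : ℕ} (L : Mat n → Mat n) : Prop :=
  ∃ (H : Mat n) (m : ℕ) (V : Fin m → Mat n), H.IsHermitian ∧ L = lindbladOf H V

/-- The Hilbert–Schmidt norm of a matrix. -/
noncomputable def hsNorm {n : ℕ} (x : Mat n) : ℝ :=
  Real.sqrt (Matrix.trace (xᴴ * x)).re

/-- The `2 → 2` operator norm of a map on matrices, with respect to the
Hilbert–Schmidt norm. -/
noncomputable def norm22 {n : ℕ} (L : Mat n → Mat n) : ℝ :=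
  sSup {r : ℝ | ∃ x : Mat n, hsNorm x ≤ 1 ∧ r = hsNorm (L x)}

/-- `σ`-detailed balance: `Tr(σ L(x)* y) = Tr(σ x* L(y))` for all `x, y`. -/
def DetailedBalance {n : ℕ} (σ : Mat n) (L : Mat n → Mat n) : Prop :=
  ∀ x y : Mat n, Matrix.trace (σ * (L x)ᴴ * y) = Matrix.trace (σ * xᴴ * L y)

/-- The jump operators `V` are traceless and orthonormal with respect to the
normalized trace `τ = Tr/n` (standard form). -/
def StdJump {n m : ℕ} (V : Fin m → Mat n) : Prop :=
  (∀ j, Matrix.trace (V j) = 0) ∧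
  ∀ i j, Matrix.trace ((V i)ᴴ * V j) = if i = j then (n : ℂ) else 0

/-- The jump map `Ψ(x) = Σ_j V_j* x V_j`. -/
noncomputable def jumpMap {n m : ℕ} (V : Fin m → Mat n) : Mat n → Mat n :=
  fun x => ∑ j, (V j)ᴴ * x * V j

/-- Complete positivity of a map on `Mₙ(ℂ)`. -/
def IsCPMap {n : ℕ} (Φ : Mat n → Mat n) : Prop :=
  ∀ (m : ℕ) (X : Matrix (Fin m × Fin n) (Fin m × Fin n) ℂ),
    X.PosSemidef → (amp m Φ X).PosSemidef

/-- The Lindblad generator `−(I − E_τ)`, where `E_τ(x) = τ(x)·Iₙ`. -/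
noncomputable def etauGen (n : ℕ) : Mat n → Mat n :=
  fun x => (Matrix.trace x / n) • 1 - x

/-- The gradient matrix `m_L = (Γ_L(e_{rs}, e_{tv}))` of `L`. -/
noncomputable def gradMatrix {n : ℕ} (L : Mat n → Mat n) :
    Matrix ((Fin n × Fin n) × Fin n) ((Fin n × Fin n) × Fin n) ℂ :=
  Matrix.of fun p q =>
    gradForm L (Matrix.single p.1.1 p.1.2 1)
      (Matrix.single q.1.1 q.1.2 1) p.2 q.2

/-- `E` is the trace-preserving conditional expectation onto (the subalgebra) `N`,
i.e. the orthogonal projection onto `N` for the trace inner product. -/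
def IsCondExpTau {n : ℕ} (N : Set (Mat n)) (E : Mat n → Mat n) : Prop :=
  IsLinearMap ℂ E ∧ (∀ x, E x ∈ N) ∧ (∀ x ∈ N, E x = x) ∧
  ∀ x : Mat n, ∀ y ∈ N, Matrix.trace ((x - E x)ᴴ * y) = 0

/-- `E` is the `σ`-preserving (GNS) conditional expectation onto `N`,
i.e. the orthogonal projection onto `N` for the GNS inner product
`⟨x,y⟩ = Tr(σ x* y)`. -/
def IsCondExpGNS {n : ℕ} (σ : Mat n) (N : Set (Mat n)) (E : Mat n → Mat n) : Prop :=
  IsLinearMap ℂ E ∧ (∀ x, E x ∈ N) ∧ (∀ x ∈ N, E x = x) ∧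
  ∀ x : Mat n, ∀ y ∈ N, Matrix.trace (σ * (x - E x)ᴴ * y) = 0


/-! ### Auxiliary lemmas -/

section Aux

variable {n : ℕ}

/-- The amplified commutator `[1 ⊗ A, X]`. -/
noncomputable def Dop (m₀ : ℕ) (A : Mat n) (X : Matrix (Fin m₀ × Fin n) (Fin m₀ × Fin n) ℂ) :
    Matrix (Fin m₀ × Fin n) (Fin m₀ × Fin n) ℂ :=
  ((1 : Matrix (Fin m₀) (Fin m₀) ℂ) ⊗ₖ A) * X - X * ((1 : Matrix (Fin m₀) (Fin m₀) ℂ) ⊗ₖ A)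

lemma amp_lmul (m₀ : ℕ) (A : Mat n) (X : Matrix (Fin m₀ × Fin n) (Fin m₀ × Fin n) ℂ) :
    amp m₀ (fun x => A * x) X = ((1 : Matrix (Fin m₀) (Fin m₀) ℂ) ⊗ₖ A) * X := by
  ext p q
  simp [amp, Matrix.mul_apply, Fintype.sum_prod_type, Matrix.one_apply, ite_mul,
    Finset.sum_ite_eq, Finset.sum_ite_eq']

lemma amp_rmul (m₀ : ℕ) (B : Mat n) (X : Matrix (Fin m₀ × Fin n) (Fin m₀ × Fin n) ℂ) :
    amp m₀ (fun x => x * B) X = X * ((1 : Matrix (Fin m₀) (Fin m₀) ℂ) ⊗ₖ B) := by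
  ext p q
  simp [amp, Matrix.mul_apply, Fintype.sum_prod_type, Matrix.one_apply, mul_ite,
    Finset.sum_ite_eq, Finset.sum_ite_eq']

lemma amp_sandwich (m₀ : ℕ) (A B : Mat n) (X : Matrix (Fin m₀ × Fin n) (Fin m₀ × Fin n) ℂ) :
    amp m₀ (fun x => A * x * B) X = ((1 : Matrix (Fin m₀) (Fin m₀) ℂ) ⊗ₖ A) * X *
      ((1 : Matrix (Fin m₀) (Fin m₀) ℂ) ⊗ₖ B) := by
  have h1 : amp m₀ (fun x => A * x * B) X
      = amp m₀ (fun x => x * B) (amp m₀ (fun x => A * x) X) := by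
    ext p q; rfl
  rw [h1, amp_lmul, amp_rmul]

lemma amp_add (m₀ : ℕ) (f g : Mat n → Mat n) (X : Matrix (Fin m₀ × Fin n) (Fin m₀ × Fin n) ℂ) :
    amp m₀ (fun x => f x + g x) X = amp m₀ f X + amp m₀ g X := by
  ext p q; simp [amp]

lemma amp_sub (m₀ : ℕ) (f g : Mat n → Mat n) (X : Matrix (Fin m₀ × Fin n) (Fin m₀ × Fin n) ℂ) :
    amp m₀ (fun x => f x - g x) X = amp m₀ f X - amp m₀ g X := by
  ext p q; simp [amp]

lemma amp_smul (m₀ : ℕ) (c : ℂ) (f : Mat n → Mat n)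
    (X : Matrix (Fin m₀ × Fin n) (Fin m₀ × Fin n) ℂ) :
    amp m₀ (fun x => c • f x) X = c • amp m₀ f X := by
  ext p q; simp [amp]

lemma amp_sum (m₀ : ℕ) {k : ℕ} (f : Fin k → Mat n → Mat n)
    (X : Matrix (Fin m₀ × Fin n) (Fin m₀ × Fin n) ℂ) :
    amp m₀ (fun x => ∑ j, f j x) X = ∑ j, amp m₀ (f j) X := by
  ext p q; simp [amp, Matrix.sum_apply]

lemma amp_lindblad (m₀ : ℕ) {k : ℕ} (H : Mat n) (V : Fin k → Mat n)
    (X : Matrix (Fin m₀ × Fin n) (Fin m₀ × Fin n) ℂ) :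
    amp m₀ (lindbladOf H V) X =
      Complex.I • (((1 : Matrix (Fin m₀) (Fin m₀) ℂ) ⊗ₖ H) * X -
        X * ((1 : Matrix (Fin m₀) (Fin m₀) ℂ) ⊗ₖ H)) +
      ∑ j, ((((1 : Matrix (Fin m₀) (Fin m₀) ℂ) ⊗ₖ V j)ᴴ) * X *
              ((1 : Matrix (Fin m₀) (Fin m₀) ℂ) ⊗ₖ V j) -
        (2⁻¹ : ℂ) • ((((1 : Matrix (Fin m₀) (Fin m₀) ℂ) ⊗ₖ V j)ᴴ *
            ((1 : Matrix (Fin m₀) (Fin m₀) ℂ) ⊗ₖ V j)) * X +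
          X * ((((1 : Matrix (Fin m₀) (Fin m₀) ℂ) ⊗ₖ V j)ᴴ) *
            ((1 : Matrix (Fin m₀) (Fin m₀) ℂ) ⊗ₖ V j)))) := by
  have kct : ∀ A : Mat n, ((1 : Matrix (Fin m₀) (Fin m₀) ℂ) ⊗ₖ A)ᴴ
      = (1 : Matrix (Fin m₀) (Fin m₀) ℂ) ⊗ₖ Aᴴ := by
    intro A
    ext p q
    by_cases h : p.1 = q.1
    · simp [conjTranspose_apply, Matrix.one_apply, h]
    · simp [conjTranspose_apply, Matrix.one_apply, h, Ne.symm h]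
  unfold lindbladOf
  rw [amp_add, amp_smul, amp_sub, amp_lmul, amp_rmul, amp_sum]
  congr 1
  refine Finset.sum_congr rfl fun j _ => ?_
  rw [amp_sub (f := fun x => (V j)ᴴ * x * V j), amp_smul, amp_add, amp_lmul, amp_rmul,
    amp_sandwich, kct, ← Matrix.mul_kronecker_mul, Matrix.one_mul]

lemma per_j {ι : Type*} [Fintype ι] [DecidableEq ι] (v X Y : Matrix ι ι ℂ) :
    (vᴴ * (Xᴴ * Y) * v - (2⁻¹ : ℂ) • (vᴴ * v * (Xᴴ * Y) + (Xᴴ * Y) * (vᴴ * v))) -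
      (vᴴ * Xᴴ * v - (2⁻¹ : ℂ) • (vᴴ * v * Xᴴ + Xᴴ * (vᴴ * v))) * Y -
      Xᴴ * (vᴴ * Y * v - (2⁻¹ : ℂ) • (vᴴ * v * Y + Y * (vᴴ * v))) =
    (v * X - X * v)ᴴ * (v * Y - Y * v) := by
  simp only [conjTranspose_sub, conjTranspose_mul, smul_add, sub_mul, add_mul, mul_add, mul_sub,
    Matrix.smul_mul, Matrix.mul_smul, Matrix.mul_assoc]
  module

lemma per_h {ι : Type*} [Fintype ι] [DecidableEq ι] (h X Y : Matrix ι ι ℂ) :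
    Complex.I • (h * (Xᴴ * Y) - (Xᴴ * Y) * h) -
      (Complex.I • (h * Xᴴ - Xᴴ * h)) * Y - Xᴴ * (Complex.I • (h * Y - Y * h)) = 0 := by
  simp only [smul_sub, Matrix.smul_mul, Matrix.mul_smul, sub_mul, mul_sub, Matrix.mul_assoc]
  abel

lemma gradAmp_lindblad (m₀ : ℕ) {k : ℕ} (H : Mat n) (V : Fin k → Mat n)
    (X Y : Matrix (Fin m₀ × Fin n) (Fin m₀ × Fin n) ℂ) :
    gradFormAmp m₀ (lindbladOf H V) X Y = ∑ j, (Dop m₀ (V j) X)ᴴ * (Dop m₀ (V j) Y) := by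
  unfold gradFormAmp Dop
  rw [amp_lindblad, amp_lindblad, amp_lindblad]
  rw [add_mul, mul_add, Finset.sum_mul, Finset.mul_sum]
  have rearrange :
      ∀ (a a' a'' : Matrix (Fin m₀ × Fin n) (Fin m₀ × Fin n) ℂ)
        (b b' b'' : Fin k → Matrix (Fin m₀ × Fin n) (Fin m₀ × Fin n) ℂ),
      (a + ∑ j, b j) - (a' + ∑ j, b' j) - (a'' + ∑ j, b'' j) =
        (a - a' - a'') + ∑ j, (b j - b' j - b'' j) := by
    intro a a' a'' b b' b''
    rw [Finset.sum_sub_distrib, Finset.sum_sub_distrib]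
    abel
  rw [rearrange, per_h, zero_add]
  refine Finset.sum_congr rfl fun j _ => per_j _ _ _

lemma amp_combo (m₀ : ℕ) (c : ℂ) (f g : Mat n → Mat n)
    (X : Matrix (Fin m₀ × Fin n) (Fin m₀ × Fin n) ℂ) :
    amp m₀ (fun x => c • f x - g x) X = c • amp m₀ f X - amp m₀ g X := by
  ext p q; simp [amp]

lemma gradAmp_combo (m₀ : ℕ) (c : ℂ) (f g : Mat n → Mat n)
    (X Y : Matrix (Fin m₀ × Fin n) (Fin m₀ × Fin n) ℂ) :
    gradFormAmp m₀ (fun x => c • f x - g x) X Y =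
      c • gradFormAmp m₀ f X Y - gradFormAmp m₀ g X Y := by
  unfold gradFormAmp
  rw [amp_combo, amp_combo, amp_combo]
  simp only [smul_sub, Matrix.smul_mul, Matrix.mul_smul, sub_mul, mul_sub]
  abel

/-- The main reduction: the amplified gradient form of `C·L' − L`. -/
lemma gradAmp_main (m₀ : ℕ) (c : ℂ) {k k' : ℕ} (H H' : Mat n)
    (V : Fin k → Mat n) (W : Fin k' → Mat n)
    (X : Matrix (Fin m₀ × Fin n) (Fin m₀ × Fin n) ℂ) :
    gradFormAmp m₀ (fun x => c • lindbladOf H' W x - lindbladOf H V x) X X =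
      c • ∑ i, (Dop m₀ (W i) X)ᴴ * (Dop m₀ (W i) X) -
        ∑ j, (Dop m₀ (V j) X)ᴴ * (Dop m₀ (V j) X) := by
  rw [gradAmp_combo, gradAmp_lindblad, gradAmp_lindblad]

lemma sum_mulVec {ι κ : Type*} [Fintype ι] [Fintype κ] (f : κ → Matrix ι ι ℂ) (s : Finset κ)
    (ξ : ι → ℂ) : (∑ j ∈ s, f j) *ᵥ ξ = ∑ j ∈ s, f j *ᵥ ξ := by
  ext p
  simp [Matrix.mulVec, dotProduct, Matrix.sum_apply, Finset.sum_mul]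
  rw [Finset.sum_comm]

/-- quadratic form of `AᴴA`. -/
lemma quad {ι : Type*} [Fintype ι] [DecidableEq ι] (A : Matrix ι ι ℂ) (ξ : ι → ℂ) :
    dotProduct (star ξ) ((Aᴴ * A) *ᵥ ξ) = ((∑ p, Complex.normSq ((A *ᵥ ξ) p) : ℝ) : ℂ) := by
  rw [← Matrix.mulVec_mulVec, Matrix.dotProduct_mulVec, ← Matrix.star_mulVec]
  simp only [dotProduct, Pi.star_apply]
  push_cast
  refine Finset.sum_congr rfl fun p _ => ?_
  rw [Complex.star_def, ← Complex.normSq_eq_conj_mul_self]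

/-- Quadratic form of the main matrix, as a real number. -/
lemma quad_main (m₀ : ℕ) (c : ℝ) {k k' : ℕ}
    (M : Fin k' → Matrix (Fin m₀ × Fin n) (Fin m₀ × Fin n) ℂ)
    (N : Fin k → Matrix (Fin m₀ × Fin n) (Fin m₀ × Fin n) ℂ)
    (ξ : Fin m₀ × Fin n → ℂ) :
    dotProduct (star ξ) (((c : ℂ) • ∑ i, (M i)ᴴ * (M i) - ∑ j, (N j)ᴴ * (N j)) *ᵥ ξ)
      = ((c * ∑ i, ∑ p, Complex.normSq ((M i *ᵥ ξ) p)
          - ∑ j, ∑ p, Complex.normSq ((N j *ᵥ ξ) p) : ℝ) : ℂ) := by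
  rw [Matrix.sub_mulVec, smul_mulVec, dotProduct_sub, dotProduct_smul,
    _root_.sum_mulVec, _root_.sum_mulVec, dotProduct_sum, dotProduct_sum]
  simp only [quad, smul_eq_mul]
  push_cast
  ring

lemma isHermitian_main (m₀ : ℕ) (c : ℝ) {k k' : ℕ}
    (M : Fin k' → Matrix (Fin m₀ × Fin n) (Fin m₀ × Fin n) ℂ)
    (N : Fin k → Matrix (Fin m₀ × Fin n) (Fin m₀ × Fin n) ℂ) :
    ((c : ℂ) • ∑ i, (M i)ᴴ * (M i) - ∑ j, (N j)ᴴ * (N j)).IsHermitian := by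
  unfold Matrix.IsHermitian
  rw [Matrix.conjTranspose_sub, Matrix.conjTranspose_smul]
  congr 1
  · rw [Matrix.conjTranspose_sum]
    simp [Matrix.conjTranspose_mul, Complex.star_def, Complex.conj_ofReal]
  · rw [Matrix.conjTranspose_sum]
    simp [Matrix.conjTranspose_mul]

end Aux

section Aux2

variable {n : ℕ}

/-- The maximally entangled (unnormalized) vector. -/
noncomputable def Om (n : ℕ) : Fin n × Fin n → ℂ := fun p => if p.1 = p.2 then 1 else 0

lemma kron_mulVec_diag (x y : Mat n) (p : Fin n × Fin n) :
    ((x ⊗ₖ y) *ᵥ Om n) p = (x * yᵀ) p.1 p.2 := by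
  simp [Matrix.mulVec, dotProduct, Om, Fintype.sum_prod_type, Matrix.mul_apply,
    mul_ite, Finset.sum_ite_eq, Finset.sum_ite_eq', Matrix.transpose_apply]

lemma phi_formula (z : Fin n) (G A : Mat n) (hG : Matrix.trace G = 0) :
    ∑ v : Fin n, ((-(Matrix.single z v (1:ℂ))) *
        (A * (Matrix.single z v (1:ℂ) * G))ᵀ -
      (-(Matrix.single z v (1:ℂ))) *
        ((Matrix.single z v (1:ℂ) * G) * A)ᵀ) =
    Matrix.trace (G * A) • Matrix.single z z (1:ℂ) := by
  have hG' : ∑ x : Fin n, G x x = 0 := hG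
  ext p q
  by_cases h1 : z = p
  · subst h1
    by_cases h2 : z = q
    · subst h2
      simp [Matrix.sum_apply, Matrix.mul_apply, Matrix.single, ite_and,
        Finset.sum_ite_eq, Finset.sum_ite_eq', mul_ite, ite_mul, mul_zero, zero_mul,
        Finset.sum_sub_distrib, ← Finset.mul_sum, hG', Matrix.trace, Matrix.diag]
      have h0 : ∑ x : Fin n, (-(G x x * A z z)) = 0 := by
        rw [Finset.sum_neg_distrib, ← Finset.sum_mul, hG', zero_mul, neg_zero]
      rw [Finset.sum_add_distrib, h0, zero_add]
      exact Finset.sum_congr rfl fun x _ => Finset.sum_congr rfl fun j _ => by ring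
    · simp [h2, Matrix.sum_apply, Matrix.mul_apply, Matrix.single, ite_and,
        Finset.sum_ite_eq, Finset.sum_ite_eq', mul_ite, ite_mul, mul_zero, zero_mul,
        Finset.sum_sub_distrib, ← Finset.mul_sum, hG']
      rw [← Finset.sum_mul, hG', zero_mul]
  · simp [h1, Matrix.sum_apply, Matrix.mul_apply, Matrix.single, ite_and,
      Finset.sum_ite_eq, Finset.sum_ite_eq', mul_ite, ite_mul, mul_zero, zero_mul,
      Finset.sum_sub_distrib]

/-- The test matrix built from a functional matrix `G`. -/
noncomputable def Xmat (z : Fin n) (G : Mat n) :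
    Matrix (Fin n × Fin n) (Fin n × Fin n) ℂ :=
  ∑ v : Fin n, ((-(Matrix.single z v (1:ℂ))) ⊗ₖ (Matrix.single z v (1:ℂ) * G))

lemma Dop_mulVec_omega (z : Fin n) (G A : Mat n) (hG : Matrix.trace G = 0) :
    (Dop n A (Xmat z G)) *ᵥ Om n =
      fun p => (Matrix.trace (G * A) • Matrix.single z z (1:ℂ)) p.1 p.2 := by
  have hL : ((1 : Matrix (Fin n) (Fin n) ℂ) ⊗ₖ A) * Xmat z G =
      ∑ v : Fin n, ((-(Matrix.single z v (1:ℂ))) ⊗ₖ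
        (A * (Matrix.single z v (1:ℂ) * G))) := by
    unfold Xmat
    rw [Finset.mul_sum]
    exact Finset.sum_congr rfl fun v _ => by
      rw [← Matrix.mul_kronecker_mul, Matrix.one_mul]
  have hR : Xmat z G * ((1 : Matrix (Fin n) (Fin n) ℂ) ⊗ₖ A) =
      ∑ v : Fin n, ((-(Matrix.single z v (1:ℂ))) ⊗ₖ
        ((Matrix.single z v (1:ℂ) * G) * A)) := by
    unfold Xmat
    rw [Finset.sum_mul]
    exact Finset.sum_congr rfl fun v _ => by
      rw [← Matrix.mul_kronecker_mul, Matrix.mul_one]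
  funext p
  rw [Dop, hL, hR, Matrix.sub_mulVec, _root_.sum_mulVec, _root_.sum_mulVec]
  simp only [Pi.sub_apply, Finset.sum_apply, kron_mulVec_diag]
  rw [← Finset.sum_sub_distrib]
  have hphi := congrArg (fun (M : Mat n) => M p.1 p.2) (phi_formula z G A hG)
  simpa [Matrix.sum_apply, Matrix.sub_apply] using hphi

lemma normSq_omega_vec (z : Fin n) (c : ℂ) :
    ∑ p : Fin n × Fin n, Complex.normSq ((c • Matrix.single z z (1:ℂ)) p.1 p.2)
      = Complex.normSq c := by
  simp [Fintype.sum_prod_type, Matrix.single, Matrix.smul_apply, smul_eq_mul,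
    mul_ite, mul_one, mul_zero, ite_and, apply_ite Complex.normSq,
    Finset.sum_ite_eq, Finset.sum_ite_eq']

lemma kron_one_linear (m₀ : ℕ) {k' : ℕ} (c : Fin k' → ℂ) (W : Fin k' → Mat n) :
    ((1 : Matrix (Fin m₀) (Fin m₀) ℂ) ⊗ₖ (∑ i, c i • W i)) =
      ∑ i, c i • ((1 : Matrix (Fin m₀) (Fin m₀) ℂ) ⊗ₖ W i) := by
  ext p q
  simp only [Matrix.kroneckerMap_apply, Matrix.sum_apply, Matrix.smul_apply, smul_eq_mul,
    Finset.mul_sum]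
  exact Finset.sum_congr rfl fun i _ => by ring

lemma Dop_linear (m₀ : ℕ) {k' : ℕ} (c : Fin k' → ℂ) (W : Fin k' → Mat n)
    (X : Matrix (Fin m₀ × Fin n) (Fin m₀ × Fin n) ℂ) :
    Dop m₀ (∑ i, c i • W i) X = ∑ i, c i • Dop m₀ (W i) X := by
  unfold Dop
  rw [kron_one_linear, Finset.sum_mul, Finset.mul_sum, ← Finset.sum_sub_distrib]
  exact Finset.sum_congr rfl fun i _ => by
    rw [Matrix.smul_mul, Matrix.mul_smul, smul_sub]

/-- Cauchy–Schwarz for `normSq`. -/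
lemma cs_bound {k' : ℕ} (a u : Fin k' → ℂ) :
    Complex.normSq (∑ i, a i * u i) ≤ (∑ i, Complex.normSq (a i)) * ∑ i, Complex.normSq (u i) := by
  have h1 : ‖∑ i, a i * u i‖ ≤ ∑ i, ‖a i‖ * ‖u i‖ := by
    refine le_trans (norm_sum_le _ _) (le_of_eq ?_)
    exact Finset.sum_congr rfl fun i _ => norm_mul _ _
  have h2 : (∑ i, ‖a i‖ * ‖u i‖) ^ 2 ≤
      (∑ i, ‖a i‖ ^ 2) * ∑ i, ‖u i‖ ^ 2 :=
    Finset.sum_mul_sq_le_sq_mul_sq _ _ _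
  calc Complex.normSq (∑ i, a i * u i) = ‖∑ i, a i * u i‖ ^ 2 :=
        (Complex.sq_norm _).symm
    _ ≤ (∑ i, ‖a i‖ * ‖u i‖) ^ 2 := by
        refine pow_le_pow_left₀ (norm_nonneg _) h1 2
    _ ≤ (∑ i, ‖a i‖ ^ 2) * ∑ i, ‖u i‖ ^ 2 := h2
    _ = (∑ i, Complex.normSq (a i)) * ∑ i, Complex.normSq (u i) := by
        simp [Complex.sq_norm]

end Aux2

/-- for Lindblad generators in standard form, `Γ_L ≤_cp C Γ_{L'}`
for some `C > 0` iff `span{V₁,…,V_m} ⊆ span{W₁,…,W_{m'}}`. -/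
theorem stmt2 (n m m' : ℕ) (H H' : Mat n) (hH : H.IsHermitian) (hH' : H'.IsHermitian)
    (V : Fin m → Mat n) (W : Fin m' → Mat n) (hV : StdJump V) (hW : StdJump W) :
    (∃ C : ℝ, 0 < C ∧
      GradCP (fun x => (C : ℂ) • lindbladOf H' W x - lindbladOf H V x)) ↔
    Submodule.span ℂ (Set.range V) ≤ Submodule.span ℂ (Set.range W) := by
  rcases Nat.eq_zero_or_pos n with hn0 | hn
  · subst hn0
    constructor
    · intro _
      rw [Submodule.span_le]
      intro x hx
      have hx0 : x = 0 := by ext i j; exact i.elim0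
      rw [hx0]
      exact Submodule.zero_mem _
    · intro _
      refine ⟨1, one_pos, ?_⟩
      intro m₀ X
      haveI : IsEmpty (Fin m₀ × Fin 0) := ⟨fun p => p.2.elim0⟩
      refine posSemidef_iff_dotProduct_mulVec.mpr ⟨?_, ?_⟩
      · ext p q; exact p.2.elim0
      · intro x
        simp [dotProduct]
  · constructor
    · rintro ⟨C, hC, hcp⟩
      rw [Submodule.span_le]
      rintro x ⟨j, rfl⟩
      set z : Fin n := ⟨0, hn⟩ with hz
      set U : Submodule ℂ (Mat n) := Submodule.span ℂ (Set.range W ∪ {1}) with hU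
      have hVjU : V j ∈ U := by
        by_contra hnot
        obtain ⟨ℓ, hx, hbot⟩ := U.exists_dual_map_eq_bot_of_notMem hnot inferInstance
        have hker : ∀ y ∈ U, ℓ y = 0 := by
          intro y hy
          have hmem : ℓ y ∈ U.map ℓ := ⟨y, hy, rfl⟩
          rw [hbot] at hmem
          simpa using hmem
        have hW0 : ∀ i, ℓ (W i) = 0 := fun i =>
          hker _ (Submodule.subset_span (Or.inl ⟨i, rfl⟩))
        have h10 : ℓ (1 : Mat n) = 0 := hker _ (Submodule.subset_span (Or.inr rfl))
        set G : Mat n := Matrix.of fun a b => ℓ (Matrix.single b a (1:ℂ)) with hGdef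
        have hGA : ∀ A : Mat n, Matrix.trace (G * A) = ℓ A := by
          intro A
          conv_rhs => rw [matrix_eq_sum_single A]
          rw [map_sum]
          simp only [map_sum]
          have hsb : ∀ (i j1 : Fin n), Matrix.single i j1 (A i j1)
              = A i j1 • Matrix.single i j1 (1:ℂ) := by
            intro i j1
            rw [Matrix.smul_single, smul_eq_mul, mul_one]
          simp only [hsb, _root_.map_smul, smul_eq_mul]
          rw [Matrix.trace]
          simp only [Matrix.diag_apply, Matrix.mul_apply]
          rw [Finset.sum_comm]
          refine Finset.sum_congr rfl fun b _ => Finset.sum_congr rfl fun a _ => ?_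
          have : G a b = ℓ (Matrix.single b a (1:ℂ)) := rfl
          rw [this, mul_comm]
        have hGtr : Matrix.trace G = 0 := by
          have := hGA 1
          rwa [mul_one, h10] at this
        have hpos := (hcp n (Xmat z G)).dotProduct_mulVec_nonneg (Om n)
        rw [gradAmp_main, quad_main, Complex.zero_le_real] at hpos
        have hSi : ∀ i, ∑ p, Complex.normSq ((Dop n (W i) (Xmat z G) *ᵥ Om n) p) = 0 := by
          intro i
          rw [Dop_mulVec_omega z G (W i) hGtr]
          have h' : Matrix.trace (G * W i) = 0 := by rw [hGA]; exact hW0 i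
          simp only [h']
          simpa using normSq_omega_vec (n := n) z 0
        have hTj : ∀ j', ∑ p, Complex.normSq ((Dop n (V j') (Xmat z G) *ᵥ Om n) p)
            = Complex.normSq (ℓ (V j')) := by
          intro j'
          rw [Dop_mulVec_omega z G (V j') hGtr]
          simp only [hGA (V j')]
          simpa using normSq_omega_vec (n := n) z (ℓ (V j'))
        have e1 : ∑ i, ∑ p, Complex.normSq ((Dop n (W i) (Xmat z G) *ᵥ Om n) p) = 0 :=
          Finset.sum_eq_zero fun i _ => hSi i
        have e2 : ∑ j', ∑ p, Complex.normSq ((Dop n (V j') (Xmat z G) *ᵥ Om n) p)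
            = ∑ j', Complex.normSq (ℓ (V j')) :=
          Finset.sum_congr rfl fun j' _ => hTj j'
        rw [e1, e2, mul_zero, zero_sub] at hpos
        have hle : Complex.normSq (ℓ (V j)) ≤ ∑ j', Complex.normSq (ℓ (V j')) :=
          Finset.single_le_sum (f := fun j' => Complex.normSq (ℓ (V j')))
            (fun _ _ => Complex.normSq_nonneg _) (Finset.mem_univ j)
        have hlt : 0 < Complex.normSq (ℓ (V j)) := Complex.normSq_pos.mpr hx
        linarith
      rw [hU, Submodule.span_union] at hVjU
      obtain ⟨w, hw, u, hu, heq⟩ := Submodule.mem_sup.mp hVjU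
      obtain ⟨c, rfl⟩ := Submodule.mem_span_singleton.mp hu
      have htrw : Matrix.trace w = 0 := by
        have hsub : Submodule.span ℂ (Set.range W)
            ≤ LinearMap.ker (Matrix.traceLinearMap (Fin n) ℂ ℂ) := by
          rw [Submodule.span_le]
          rintro _ ⟨i, rfl⟩
          simpa [LinearMap.mem_ker] using hW.1 i
        simpa [LinearMap.mem_ker] using hsub hw
      have htrV := hV.1 j
      rw [← heq, Matrix.trace_add, htrw, zero_add, Matrix.trace_smul, Matrix.trace_one,
        smul_eq_mul] at htrV
      have hc0 : c = 0 := by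
        rcases mul_eq_zero.mp htrV with h | h
        · exact h
        · refine absurd h ?_
          rw [Fintype.card_fin]
          exact_mod_cast hn.ne'
      rw [← heq, hc0, zero_smul, add_zero]
      exact hw
    · intro hspan
      have hc : ∀ j, ∃ c : Fin m' → ℂ, ∑ i, c i • W i = V j := fun j =>
        (Submodule.mem_span_range_iff_exists_fun ℂ).mp (hspan (Submodule.subset_span ⟨j, rfl⟩))
      choose a ha using hc
      have hsum0 : (0:ℝ) ≤ ∑ j, ∑ i, Complex.normSq (a j i) :=
        Finset.sum_nonneg fun _ _ => Finset.sum_nonneg fun _ _ => Complex.normSq_nonneg _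
      refine ⟨1 + ∑ j, ∑ i, Complex.normSq (a j i), by linarith, ?_⟩
      intro m₀ X
      have hmain := gradAmp_main m₀ ((1 + ∑ j, ∑ i, Complex.normSq (a j i) : ℝ) : ℂ) H H' V W X
      refine posSemidef_iff_dotProduct_mulVec.mpr ⟨?_, ?_⟩
      · rw [hmain]
        exact isHermitian_main m₀ _ _ _
      · intro ξ
        rw [hmain, quad_main, Complex.zero_le_real]
        set T := ∑ i, ∑ p, Complex.normSq ((Dop m₀ (W i) X *ᵥ ξ) p) with hTdef
        have hT0 : 0 ≤ T :=
          Finset.sum_nonneg fun i _ => Finset.sum_nonneg fun p _ => Complex.normSq_nonneg _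
        have hTj : ∀ j, ∑ p, Complex.normSq ((Dop m₀ (V j) X *ᵥ ξ) p)
            ≤ (∑ i, Complex.normSq (a j i)) * T := by
          intro j
          have hv : Dop m₀ (V j) X *ᵥ ξ
              = fun p => ∑ i, a j i * ((Dop m₀ (W i) X *ᵥ ξ) p) := by
            rw [← ha j, Dop_linear, _root_.sum_mulVec]
            funext p
            simp [smul_mulVec, Finset.sum_apply, Pi.smul_apply, smul_eq_mul]
          rw [hv]
          calc ∑ p, Complex.normSq (∑ i, a j i * ((Dop m₀ (W i) X *ᵥ ξ) p))
              ≤ ∑ p, (∑ i, Complex.normSq (a j i)) *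
                  (∑ i, Complex.normSq ((Dop m₀ (W i) X *ᵥ ξ) p)) :=
                Finset.sum_le_sum fun p _ => cs_bound _ _
            _ = (∑ i, Complex.normSq (a j i)) * T := by
                rw [← Finset.mul_sum, hTdef, Finset.sum_comm]
        calc (0:ℝ) ≤ (1 : ℝ) * T := by linarith
          _ ≤ (1 + ∑ j, ∑ i, Complex.normSq (a j i)) * T
              - (∑ j, ∑ i, Complex.normSq (a j i)) * T := by ring_nf; linarith
          _ ≤ (1 + ∑ j, ∑ i, Complex.normSq (a j i)) * T
              - ∑ j, ∑ p, Complex.normSq ((Dop m₀ (V j) X *ᵥ ξ) p) := by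
            have : ∑ j, ∑ p, Complex.normSq ((Dop m₀ (V j) X *ᵥ ξ) p)
                ≤ (∑ j, ∑ i, Complex.normSq (a j i)) * T := by
              rw [Finset.sum_mul]
              exact Finset.sum_le_sum fun j _ => hTj j
            linarith
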